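/- Let p be a prime and let X, Y, G be nonempty subsets of F_p. Then there exists ξ ∈ G such that |X + ξ*Y| ≥ |X| |Y| |G| / ( |X| |Y| + |G| ). -/

import Mathlib

/-!
For `ξ` fixed, Cauchy–Schwarz over the fibres of `(x, y) ↦ x + ξ • y` gives
`(|X| |Y|)² ≤ |X + ξ • Y| · E(ξ)`, where `E(ξ)` counts the pairs of points of `X × Y` with the
same image. Two distinct points of `X × Y` collide for at most one `ξ`, so summing over `ξ ∈ G`
gives `∑ E(ξ) ≤ |X| |Y| |G| + (|X| |Y|)²`, and any `ξ ∈ G` of at most average energy does the job.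
-/

open Pointwise Finset

theorem Finset.sum_sq_card_fiber_eq_card_filter {α β : Type*} [DecidableEq β]
    (s : Finset α) (f : α → β) :
    ∑ b ∈ s.image f, #{a ∈ s | f a = b} ^ 2 = #{q ∈ s ×ˢ s | f q.1 = f q.2} := by
  rw [card_filter, sum_product]
  simp_rw [← card_filter]
  rw [← sum_fiberwise_of_maps_to (g := f) (t := s.image f) fun a ha => mem_image_of_mem f ha]
  refine sum_congr rfl fun b _ => ?_
  rw [sq, ← smul_eq_mul, ← sum_const]
  refine sum_congr rfl fun a ha => ?_
  simp_rw [(mem_filter.1 ha).2, eq_comm]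

theorem Finset.sq_card_le_card_image_mul_card_filter {α β : Type*} [DecidableEq β]
    (s : Finset α) (f : α → β) :
    #s ^ 2 ≤ #(s.image f) * #{q ∈ s ×ˢ s | f q.1 = f q.2} :=
  calc #s ^ 2 = (∑ b ∈ s.image f, #{a ∈ s | f a = b}) ^ 2 := by
        rw [← card_eq_sum_card_fiberwise fun a ha => mem_image_of_mem f ha]
    _ ≤ #(s.image f) * ∑ b ∈ s.image f, #{a ∈ s | f a = b} ^ 2 := by
        simpa using sum_mul_sq_le_sq_mul_sq (R := ℕ) _ 1 _
    _ = #(s.image f) * #{q ∈ s ×ˢ s | f q.1 = f q.2} := by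
        rw [sum_sq_card_fiber_eq_card_filter]

section Dilate

variable {R M : Type*} [Ring R] [AddCommGroup M] [Module R M]

theorem eq_of_add_smul_eq_add_smul [IsCancelMulZero R] [Module.IsTorsionFree R M]
    {p p' : M × M} {ξ ξ' : R} (hne : p ≠ p')
    (h : p.1 + ξ • p.2 = p'.1 + ξ • p'.2) (h' : p.1 + ξ' • p.2 = p'.1 + ξ' • p'.2) :
    ξ = ξ' := by
  by_contra hξ
  have diff_eq {η : R} (hη : p.1 + η • p.2 = p'.1 + η • p'.2) :
      η • p.2 - η • p'.2 = p'.1 - p.1 := by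
    rw [sub_eq_sub_iff_add_eq_add, add_comm]
    exact hη
  have hy : p.2 = p'.2 := by
    refine smul_right_injective M (sub_ne_zero.2 hξ) ?_
    dsimp only
    rw [sub_smul, sub_smul, sub_eq_sub_iff_sub_eq_sub, diff_eq h, diff_eq h']
  exact hne (Prod.ext (by simpa [hy] using h) hy)

variable [DecidableEq M]

def dilateEnergy (X Y : Finset M) (ξ : R) : ℕ :=
  #{q ∈ (X ×ˢ Y) ×ˢ (X ×ˢ Y) | q.1.1 + ξ • q.1.2 = q.2.1 + ξ • q.2.2}

theorem image_add_smul_product (X Y : Finset M) (ξ : R) :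
    (X ×ˢ Y).image (fun q => q.1 + ξ • q.2) = X + ξ • Y := by
  change _ = image₂ (· + ·) X (Y.image (ξ • ·))
  rw [image₂_image_right, ← image_uncurry_product]
  rfl

theorem sq_card_mul_card_le_card_add_smul_mul_dilateEnergy (X Y : Finset M) (ξ : R) :
    (#X * #Y) ^ 2 ≤ #(X + ξ • Y) * dilateEnergy X Y ξ := by
  rw [← image_add_smul_product, ← card_product]
  exact sq_card_le_card_image_mul_card_filter _ _

variable [IsCancelMulZero R] [Module.IsTorsionFree R M]

theorem card_filter_add_smul_eq_le (G : Finset R) (q : (M × M) × (M × M)) :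
    #{ξ ∈ G | q.1.1 + ξ • q.1.2 = q.2.1 + ξ • q.2.2} ≤ (if q.1 = q.2 then #G else 0) + 1 := by
  split_ifs with hq
  · exact (card_filter_le _ _).trans (Nat.le_succ _)
  · refine card_le_one.2 fun ξ hξ ξ' hξ' => ?_
    exact eq_of_add_smul_eq_add_smul hq (mem_filter.1 hξ).2 (mem_filter.1 hξ').2

theorem sum_dilateEnergy_le (X Y : Finset M) (G : Finset R) :
    ∑ ξ ∈ G, dilateEnergy X Y ξ ≤ #X * #Y * #G + (#X * #Y) ^ 2 := by
  set P := X ×ˢ Y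
  calc ∑ ξ ∈ G, dilateEnergy X Y ξ
      = ∑ q ∈ P ×ˢ P, #{ξ ∈ G | q.1.1 + ξ • q.1.2 = q.2.1 + ξ • q.2.2} := by
        simp only [dilateEnergy, card_filter]
        exact sum_comm
    _ ≤ ∑ q ∈ P ×ˢ P, ((if q.1 = q.2 then #G else 0) + 1) :=
        sum_le_sum fun q _ => card_filter_add_smul_eq_le G q
    _ = #P * #G + #P ^ 2 := by
        rw [sum_add_distrib, sum_ite, sum_const, sum_const_zero, ← diag_eq_filter, diag_card]
        simp [sq]
    _ = #X * #Y * #G + (#X * #Y) ^ 2 := by rw [card_product]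

theorem exists_card_mul_dilateEnergy_le (X Y : Finset M) {G : Finset R} (hG : G.Nonempty) :
    ∃ ξ ∈ G, #G * dilateEnergy X Y ξ ≤ #X * #Y * #G + (#X * #Y) ^ 2 :=
  exists_le_of_sum_le hG <| by
    rw [← mul_sum, sum_const, smul_eq_mul]
    exact Nat.mul_le_mul_left _ (sum_dilateEnergy_le X Y G)

end Dilate

theorem mul_div_add_le_of_sq_le_mul {𝕜 : Type*} [Field 𝕜] [LinearOrder 𝕜]
    [IsStrictOrderedRing 𝕜] {a g K E : 𝕜} (ha : 0 ≤ a) (hg : 0 < g) (hK : 0 ≤ K)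
    (hKE : a ^ 2 ≤ K * E) (hE : g * E ≤ a * g + a ^ 2) : a * g / (a + g) ≤ K := by
  rw [div_le_iff₀ (by positivity)]
  rcases ha.eq_or_lt with rfl | ha
  · simpa using mul_nonneg hK hg.le
  refine le_of_mul_le_mul_left ?_ ha
  calc a * (a * g) = g * a ^ 2 := by ring
    _ ≤ g * (K * E) := by gcongr
    _ = K * (g * E) := by ring
    _ ≤ K * (a * g + a ^ 2) := by gcongr
    _ = a * (K * (a + g)) := by ring

theorem exists_dilate_sum_general (p : ℕ) (hp : p.Prime)
    (X Y G : Finset (ZMod p)) (hG : G.Nonempty) :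
    ∃ ξ ∈ G,
      (X.card : ℝ) * Y.card * G.card / ((X.card : ℝ) * Y.card + G.card)
        ≤ ((X + ξ • Y).card : ℝ) := by
  have := Fact.mk hp
  obtain ⟨ξ, hξG, hξ⟩ := exists_card_mul_dilateEnergy_le X Y hG
  have hcs := sq_card_mul_card_le_card_add_smul_mul_dilateEnergy X Y ξ
  exact ⟨ξ, hξG, mul_div_add_le_of_sq_le_mul (E := dilateEnergy X Y ξ) (by positivity)
    (by exact_mod_cast hG.card_pos) (by positivity) (by exact_mod_cast hcs) (by exact_mod_cast hξ)⟩

/-- For any sets `X, Y, G ⊆ F_p` there exists `ξ ∈ G` with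
`|X + ξ*Y| ≥ |X||Y||G| / (|X||Y| + |G|)`. -/
theorem exists_dilate_sum (p : ℕ) (hp : p.Prime)
    (X Y G : Finset (ZMod p)) (hX : X.Nonempty) (hY : Y.Nonempty) (hG : G.Nonempty) :
    ∃ ξ ∈ G,
      (X.card : ℝ) * Y.card * G.card / ((X.card : ℝ) * Y.card + G.card)
        ≤ ((X + ξ • Y).card : ℝ) :=
  exists_dilate_sum_general p hp X Y G hG
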